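/- arXiv:math/9805010 — 2 statements merged into one kernel-verified Lean document; each statement's English description precedes it below -/
import Mathlib

section
/- Let a, b, c ∈ ℂ with Re(c − a − b) > 0 and with c, c − a, c − b not nonpositive integers. For n ∈ ℕ set F(n,k) := [(a)_k (b)_k / ((c+n)_k · k!)] · Γ(c+n−a) Γ(c+n−b) / (Γ(c+n) Γ(c+n−a−b)). Then for every n ∈ ℕ the series ∑_{k=0}^∞ F(n,k) converges absolutely and its sum is independent of n, i.e. ∑_{k=0}^∞ F(n,k) = ∑_{k=0}^∞ F(0,k) for all n ∈ ℕ. -/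
/-!
Write `t_s(k) = (a)_k (b)_k / ((s)_k k!)` and `R(s) = Γ(s-a) Γ(s-b) / (Γ(s) Γ(s-a-b))`, so that
`F(n,k) = t_{c+n}(k) R(c+n)`. The terms satisfy the contiguous relation
`(s-a-b) t_s(k) - (s-a)(s-b)/s · t_{s+1}(k) = k t_s(k) - (k+1) t_s(k+1)`.
By Euler's limit formula for `Γ`, `k t_s(k) = O(k^{-Re(s-a-b)}) → 0`, so the right side telescopes
to `0` and `(s-a-b) ∑ t_s = (s-a)(s-b)/s · ∑ t_{s+1}`. This is exactly the factor by which the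
functional equation of `Γ` turns `R(s)` into `R(s+1)`.
-/

open Complex

/-- Pochhammer symbol `(a)_k = a (a+1) ⋯ (a+k-1)`. -/
noncomputable def poch (a : ℂ) (k : ℕ) : ℂ := ∏ i ∈ Finset.range k, (a + i)

/-- The normalized summand `F(n,k)` for Gauss' summation. -/
noncomputable def Fg (a b c : ℂ) (n k : ℕ) : ℂ :=
  poch a k * poch b k / (poch (c + n) k * (Nat.factorial k : ℂ)) *
    (Complex.Gamma (c + n - a) * Complex.Gamma (c + n - b) /
      (Complex.Gamma (c + n) * Complex.Gamma (c + n - a - b)))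

open Filter Topology Asymptotics

lemma poch_succ (s : ℂ) (k : ℕ) : poch s (k + 1) = poch s k * (s + k) :=
  Finset.prod_range_succ _ _

lemma poch_succ_left (s : ℂ) (k : ℕ) : poch s (k + 1) = s * poch (s + 1) k := by
  rw [poch, Finset.prod_range_succ', mul_comm, Nat.cast_zero, add_zero]
  congr 1
  exact Finset.prod_congr rfl fun i _ => by push_cast; ring

lemma poch_ne_zero {s : ℂ} (hs : ∀ m : ℕ, s + m ≠ 0) (k : ℕ) : poch s k ≠ 0 :=
  Finset.prod_ne_zero_iff.mpr fun i _ => hs i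

lemma poch_eq_zero_of_lt {s : ℂ} {m k : ℕ} (hm : s + m = 0) (hk : m < k) : poch s k = 0 :=
  Finset.prod_eq_zero (Finset.mem_range.mpr hk) hm

lemma GammaSeq_eq_poch (s : ℂ) (k : ℕ) :
    GammaSeq s k = (k : ℂ) ^ s * k.factorial / poch s (k + 1) := rfl

/-- The `k`-th term of the hypergeometric series `₂F₁(a, b; s; 1)`. -/
noncomputable def gaussTerm (a b s : ℂ) (k : ℕ) : ℂ :=
  poch a k * poch b k / (poch s k * k.factorial)

noncomputable def gammaRatio (a b s : ℂ) : ℂ :=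
  Gamma (s - a) * Gamma (s - b) / (Gamma s * Gamma (s - a - b))

lemma Fg_eq (a b c : ℂ) (n k : ℕ) :
    Fg a b c n k = gaussTerm a b (c + n) k * gammaRatio a b (c + n) := rfl

lemma gaussTerm_succ (a b s : ℂ) (k : ℕ) :
    gaussTerm a b s (k + 1) = (a + k) * (b + k) / ((s + k) * (k + 1)) * gaussTerm a b s k := by
  rw [gaussTerm, gaussTerm, poch_succ, poch_succ, poch_succ, Nat.factorial_succ,
    div_mul_div_comm]
  push_cast
  congr 1 <;> ring

section gaussTerm

variable {a b s : ℂ}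

lemma gaussTerm_add_one (hs : s ≠ 0) (k : ℕ) :
    gaussTerm a b (s + 1) k = s / (s + k) * gaussTerm a b s k := by
  have h : poch (s + 1) k = poch s k * (s + k) / s := by
    rw [eq_div_iff hs, ← poch_succ, poch_succ_left, mul_comm]
  rw [gaussTerm, gaussTerm, h, div_mul_eq_mul_div, div_div_eq_mul_div, div_mul_div_comm]
  congr 1 <;> ring

lemma gaussTerm_contiguous (hs : ∀ m : ℕ, s + m ≠ 0) (k : ℕ) :
    (s - a - b) * gaussTerm a b s k - (s - a) * (s - b) / s * gaussTerm a b (s + 1) k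
      = k * gaussTerm a b s k - (k + 1) * gaussTerm a b s (k + 1) := by
  have hs0 : s ≠ 0 := by simpa using hs 0
  have hk : (k : ℂ) + 1 ≠ 0 := Nat.cast_add_one_ne_zero k
  rw [gaussTerm_add_one hs0, gaussTerm_succ]
  field_simp [hs k]
  ring

lemma gaussTerm_eventually_eq_zero (h : (∃ m : ℕ, a + m = 0) ∨ ∃ m : ℕ, b + m = 0) :
    ∀ᶠ k in atTop, gaussTerm a b s k = 0 := by
  obtain ⟨m, hm⟩ | ⟨m, hm⟩ := h <;> filter_upwards [eventually_gt_atTop m] with k hk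
  · rw [gaussTerm, poch_eq_zero_of_lt hm hk, zero_mul, zero_div]
  · rw [gaussTerm, poch_eq_zero_of_lt hm hk, mul_zero, zero_div]

lemma succ_mul_gaussTerm_succ (ha : ∀ m : ℕ, a + m ≠ 0) (hb : ∀ m : ℕ, b + m ≠ 0)
    (hs : ∀ m : ℕ, s + m ≠ 0) {k : ℕ} (hk : k ≠ 0) :
    (k + 1) * gaussTerm a b s (k + 1)
      = (k : ℂ) ^ (a + b - s) * (GammaSeq s k / (GammaSeq a k * GammaSeq b k)) := by
  have hk0 : (k : ℂ) ≠ 0 := Nat.cast_ne_zero.mpr hk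
  have hpow : (k : ℂ) ^ (a + b - s) = (k : ℂ) ^ a * (k : ℂ) ^ b / (k : ℂ) ^ s := by
    rw [cpow_sub _ _ hk0, cpow_add _ _ hk0]
  have := poch_ne_zero ha (k + 1)
  have := poch_ne_zero hb (k + 1)
  have := poch_ne_zero hs (k + 1)
  have hcpow (z : ℂ) : (k : ℂ) ^ z ≠ 0 := fun h => hk0 ((cpow_eq_zero_iff _ _).mp h).1
  rw [hpow, gaussTerm, GammaSeq_eq_poch, GammaSeq_eq_poch, GammaSeq_eq_poch, Nat.factorial_succ]
  push_cast
  field_simp [hcpow]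

end gaussTerm

section asymptotics

variable {a b s : ℂ}

/-- If `a` or `b` is a nonpositive integer the series terminates; otherwise Euler's limit formula
`GammaSeq z k → Γ z` bounds the quotient in `succ_mul_gaussTerm_succ`. -/
lemma isBigO_succ_mul_gaussTerm_succ (hs : ∀ m : ℕ, s + m ≠ 0) :
    (fun k : ℕ => (k + 1) * gaussTerm a b s (k + 1)) =O[atTop]
      fun k : ℕ => (k : ℝ) ^ (-(s - a - b).re) := by
  by_cases hterm : (∃ m : ℕ, a + m = 0) ∨ ∃ m : ℕ, b + m = 0
  · refine EventuallyEq.trans_isBigO ?_ (isBigO_zero _ _)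
    filter_upwards
      [tendsto_add_atTop_nat 1 |>.eventually (gaussTerm_eventually_eq_zero (s := s) hterm)]
      with k hk
    rw [hk, mul_zero]
  push Not at hterm
  obtain ⟨ha, hb⟩ := hterm
  have hΓ (z : ℂ) (hz : ∀ m : ℕ, z + m ≠ 0) : Gamma z ≠ 0 :=
    Gamma_ne_zero fun m h => hz m (by rw [h, neg_add_cancel])
  have hratio : Tendsto (fun k => GammaSeq s k / (GammaSeq a k * GammaSeq b k)) atTop
      (𝓝 (Gamma s / (Gamma a * Gamma b))) :=
    (GammaSeq_tendsto_Gamma s).div ((GammaSeq_tendsto_Gamma a).mul (GammaSeq_tendsto_Gamma b))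
      (mul_ne_zero (hΓ a ha) (hΓ b hb))
  have hpow : (fun k : ℕ => (k : ℂ) ^ (a + b - s)) =O[atTop]
      fun k : ℕ => (k : ℝ) ^ (-(s - a - b).re) := by
    refine .of_norm_eventuallyLE ?_
    filter_upwards [eventually_gt_atTop 0] with k hk
    rw [norm_natCast_cpow_of_pos hk, ← neg_re, show -(s - a - b) = a + b - s by ring]
  refine EventuallyEq.trans_isBigO ?_
    (by simpa only [mul_one] using hpow.mul (hratio.isBigO_one (F := ℝ)))
  filter_upwards [eventually_ne_atTop 0] with k hk
  exact succ_mul_gaussTerm_succ ha hb hs hk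

lemma tendsto_natCast_mul_gaussTerm (hs : ∀ m : ℕ, s + m ≠ 0) (hre : 0 < (s - a - b).re) :
    Tendsto (fun k : ℕ => k * gaussTerm a b s k) atTop (𝓝 0) := by
  rw [← tendsto_add_atTop_iff_nat 1]
  refine (isBigO_succ_mul_gaussTerm_succ hs).trans_tendsto
    ((tendsto_rpow_neg_atTop hre).comp tendsto_natCast_atTop_atTop) |>.congr fun k => ?_
  push_cast
  rfl

lemma summable_norm_gaussTerm (hs : ∀ m : ℕ, s + m ≠ 0) (hre : 0 < (s - a - b).re) :
    Summable fun k : ℕ => ‖gaussTerm a b s k‖ := by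
  rw [← summable_nat_add_iff 1]
  have hinv : (fun k : ℕ => ((k : ℂ) + 1)⁻¹) =O[atTop] fun k : ℕ => (k : ℝ) ^ (-1 : ℝ) := by
    refine .of_norm_eventuallyLE ?_
    filter_upwards [eventually_gt_atTop 0] with k hk
    have hk' : (0 : ℝ) < k := Nat.cast_pos.mpr hk
    rw [Real.rpow_neg_one, norm_inv, ← Nat.cast_add_one, Complex.norm_natCast, Nat.cast_add_one]
    exact inv_anti₀ hk' (by linarith)
  have hO : (fun k : ℕ => gaussTerm a b s (k + 1)) =O[atTop]
      fun k : ℕ => (k : ℝ) ^ (-(s - a - b).re - 1) := by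
    refine (hinv.mul (isBigO_succ_mul_gaussTerm_succ (a := a) (b := b) hs)).congr' ?_ ?_
    · filter_upwards with k
      rw [inv_mul_cancel_left₀ (Nat.cast_add_one_ne_zero k)]
    · filter_upwards [eventually_gt_atTop 0] with k hk
      rw [← Real.rpow_add (Nat.cast_pos.mpr hk), neg_add_eq_sub]
  exact summable_of_isBigO_nat (Real.summable_nat_rpow.mpr (by linarith)) hO.norm_left

end asymptotics

lemma tsum_sub_succ_of_tendsto_zero {G : Type*} [AddCommGroup G] [TopologicalSpace G]
    [IsTopologicalAddGroup G] [T2Space G] {f : ℕ → G}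
    (hsum : Summable fun n => f n - f (n + 1)) (hf : Tendsto f atTop (𝓝 0)) :
    ∑' n, (f n - f (n + 1)) = f 0 := by
  refine tendsto_nhds_unique hsum.hasSum.tendsto_sum_nat ?_
  simp_rw [Finset.sum_range_sub']
  simpa using tendsto_const_nhds (x := f 0) |>.sub hf

section step

variable {a b s : ℂ}

lemma sub_mul_tsum_gaussTerm (hs : ∀ m : ℕ, s + m ≠ 0) (hre : 0 < (s - a - b).re) :
    (s - a - b) * ∑' k, gaussTerm a b s k
      = (s - a) * (s - b) / s * ∑' k, gaussTerm a b (s + 1) k := by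
  have hs' (m : ℕ) : s + 1 + m ≠ 0 := by
    simpa [add_assoc, add_comm (1 : ℂ)] using hs (m + 1)
  have hre' : 0 < (s + 1 - a - b).re := by
    simp only [sub_re, add_re, one_re] at hre ⊢; linarith
  have hu := (summable_norm_gaussTerm hs hre).of_norm
  have hv := (summable_norm_gaussTerm hs' hre').of_norm
  rw [← sub_eq_zero, ← tsum_mul_left, ← tsum_mul_left, ← (hu.mul_left _).tsum_sub (hv.mul_left _),
    tsum_congr (gaussTerm_contiguous hs)]
  have htel := tsum_sub_succ_of_tendsto_zero (f := fun k : ℕ => (k : ℂ) * gaussTerm a b s k)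
    ?_ (tendsto_natCast_mul_gaussTerm hs hre)
  · simpa using htel
  · refine (((hu.mul_left _).sub (hv.mul_left _)).congr (gaussTerm_contiguous hs)).congr fun k => ?_
    push_cast
    rfl

lemma gammaRatio_add_one (hs : s ≠ 0) (ha : s - a ≠ 0) (hb : s - b ≠ 0) (hab : s - a - b ≠ 0) :
    gammaRatio a b (s + 1) = (s - a) * (s - b) / (s * (s - a - b)) * gammaRatio a b s := by
  rw [gammaRatio, gammaRatio, show s + 1 - a - b = s - a - b + 1 by ring,
    show s + 1 - a = s - a + 1 by ring, show s + 1 - b = s - b + 1 by ring,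
    Gamma_add_one _ ha, Gamma_add_one _ hb, Gamma_add_one _ hs, Gamma_add_one _ hab,
    div_mul_div_comm]
  congr 1 <;> ring

lemma tsum_gaussTerm_mul_gammaRatio_add_one (hs : ∀ m : ℕ, s + m ≠ 0) (ha : s - a ≠ 0)
    (hb : s - b ≠ 0) (hre : 0 < (s - a - b).re) :
    (∑' k, gaussTerm a b (s + 1) k) * gammaRatio a b (s + 1)
      = (∑' k, gaussTerm a b s k) * gammaRatio a b s := by
  have hs0 : s ≠ 0 := by simpa using hs 0
  have hab : s - a - b ≠ 0 := fun h => hre.ne' (by rw [h, zero_re])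
  have hsum : (s - a - b) * (∑' k, gaussTerm a b s k) * s
      = (s - a) * (s - b) * ∑' k, gaussTerm a b (s + 1) k := by
    rw [sub_mul_tsum_gaussTerm hs hre]
    field_simp
  rw [gammaRatio_add_one hs0 ha hb hab]
  field_simp
  linear_combination (-gammaRatio a b s) * hsum

end step

theorem gauss_sum_independent_of_n (a b c : ℂ) (hre : 0 < (c - a - b).re)
    (hc : ∀ m : ℕ, c ≠ -(m : ℂ)) (hca : ∀ m : ℕ, c - a ≠ -(m : ℂ))
    (hcb : ∀ m : ℕ, c - b ≠ -(m : ℂ)) :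
    (∀ n : ℕ, Summable fun k : ℕ => ‖Fg a b c n k‖) ∧
    (∀ n : ℕ, ∑' k : ℕ, Fg a b c n k = ∑' k : ℕ, Fg a b c 0 k) := by
  have hs (n m : ℕ) : c + n + m ≠ 0 := fun h =>
    hc (n + m) (by push_cast; linear_combination h)
  have hre' (n : ℕ) : 0 < (c + n - a - b).re := by
    simp only [sub_re, add_re, natCast_re] at hre ⊢
    linarith [n.cast_nonneg (α := ℝ)]
  refine ⟨fun n => ?_, fun n => ?_⟩
  · simpa only [Fg_eq, norm_mul] using
      (summable_norm_gaussTerm (hs n) (hre' n)).mul_right ‖gammaRatio a b (c + n)‖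
  simp only [Fg_eq, tsum_mul_right]
  induction n with
  | zero => rfl
  | succ n ih =>
    rw [Nat.cast_succ, ← add_assoc, ← ih, tsum_gaussTerm_mul_gammaRatio_add_one (hs n)
      (fun h => hca n (by linear_combination h)) (fun h => hcb n (by linear_combination h)) (hre' n)]
end

section
/- Let a, b, c ∈ ℂ with Re(c − a − b) > 0 and with c, c − a, c − b not nonpositive integers. For n ∈ ℕ set F(n,k) := [(a)_k (b)_k / ((c+n)_k · k!)] · Γ(c+n−a) Γ(c+n−b) / (Γ(c+n) Γ(c+n−a−b)). Then lim_{n→∞} ∑_{k=0}^∞ F(n,k) = 1. -/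
/-!
`F(n,k) = t(a,b;c+n;k) · G(n)`, where `t(a,b;c;k) = (a)_k (b)_k / ((c)_k k!)` is the `k`-th term of
`₂F₁(a,b;c;1)` and `G(n)` is the quotient of Gamma values.

As `Re c → ∞` each term with `k ≥ 1` tends to `0`; once `Re c ≥ 4(‖a‖+1)(‖b‖+1)` the ratio of
consecutive terms is at most `((k+1)/(k+2))²`, so all terms are bounded by `1/(k+1)²`, and
Tannery's theorem gives `∑ₖ t(a,b;c+n;k) → 1`.

Euler's limit formula says `Γ(s+n+1) ~ n^s n!`; in `G(n)` the powers of `n` cancel because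
`(c-a) + (c-b) = c + (c-a-b)`, so `G(n) → 1`.
-/

open Complex Filter Topology

lemma poch_eq_eval_ascPochhammer (s : ℂ) (n : ℕ) : poch s n = (ascPochhammer ℂ n).eval s := by
  induction n with
  | zero => simp [poch]
  | succ n ih => rw [poch, Finset.prod_range_succ, ← poch, ih, ascPochhammer_succ_eval]

lemma Gamma_add_nat_eq_poch_mul {s : ℂ} (hs : ∀ m : ℕ, s ≠ -m) (n : ℕ) :
    Gamma (s + n) = poch s n * Gamma s := by
  rw [poch_eq_eval_ascPochhammer, ← Gamma_add_nat_div_Gamma_eq s hs,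
    div_mul_cancel₀ _ (Gamma_ne_zero hs)]

lemma tendsto_Gamma_add_nat_succ_div {s : ℂ} (hs : ∀ m : ℕ, s ≠ -m) :
    Tendsto (fun n : ℕ => Gamma (s + (n + 1 : ℕ)) / ((n : ℂ) ^ s * n.factorial)) atTop (𝓝 1) := by
  have hlim :=
    (tendsto_const_nhds (x := Gamma s)).div (GammaSeq_tendsto_Gamma s) (Gamma_ne_zero hs)
  rw [div_self (Gamma_ne_zero hs)] at hlim
  refine hlim.congr fun n => ?_
  rw [Gamma_add_nat_eq_poch_mul hs, Pi.div_apply, GammaSeq, div_div_eq_mul_div, poch, mul_comm]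

lemma tendsto_Gamma_mul_Gamma_div_Gamma_mul_Gamma {s t u v : ℂ} (hs : ∀ m : ℕ, s ≠ -m)
    (ht : ∀ m : ℕ, t ≠ -m) (hu : ∀ m : ℕ, u ≠ -m) (hv : ∀ m : ℕ, v ≠ -m) (hsum : s + t = u + v) :
    Tendsto (fun n : ℕ => Gamma (s + n) * Gamma (t + n) / (Gamma (u + n) * Gamma (v + n)))
      atTop (𝓝 1) := by
  rw [← tendsto_add_atTop_iff_nat 1]
  have hlim := ((tendsto_Gamma_add_nat_succ_div hs).mul (tendsto_Gamma_add_nat_succ_div ht)).div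
    ((tendsto_Gamma_add_nat_succ_div hu).mul (tendsto_Gamma_add_nat_succ_div hv)) (by norm_num)
  rw [show (1 : ℂ) * 1 / (1 * 1) = 1 by norm_num] at hlim
  refine hlim.congr' ?_
  filter_upwards [eventually_ne_atTop 0] with n hn
  have hn' : (n : ℂ) ≠ 0 := Nat.cast_ne_zero.mpr hn
  have hpow : (n : ℂ) ^ s * (n : ℂ) ^ t = (n : ℂ) ^ u * (n : ℂ) ^ v := by
    rw [← cpow_add _ _ hn', ← cpow_add _ _ hn', hsum]
  have hne : (n : ℂ) ^ u * n.factorial * ((n : ℂ) ^ v * n.factorial) ≠ 0 := by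
    have : (n.factorial : ℂ) ≠ 0 := Nat.cast_ne_zero.mpr n.factorial_ne_zero
    simp [cpow_eq_zero_iff, hn', this]
  rw [Pi.div_apply, div_mul_div_comm, div_mul_div_comm,
    show (n : ℂ) ^ s * n.factorial * ((n : ℂ) ^ t * n.factorial) =
      (n : ℂ) ^ u * n.factorial * ((n : ℂ) ^ v * n.factorial) by
      linear_combination (n.factorial : ℂ) ^ 2 * hpow,
    div_div_div_cancel_right₀ hne]

noncomputable def hypergeomTerm (a b c : ℂ) (k : ℕ) : ℂ :=
  poch a k * poch b k / (poch c k * k.factorial)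

lemma hypergeomTerm_zero (a b c : ℂ) : hypergeomTerm a b c 0 = 1 := by
  simp [hypergeomTerm, poch]

lemma hypergeomTerm_succ (a b c : ℂ) (k : ℕ) :
    hypergeomTerm a b c (k + 1) =
      hypergeomTerm a b c k * ((a + k) * (b + k) / ((c + k) * (k + 1))) := by
  rw [hypergeomTerm, hypergeomTerm, div_mul_div_comm]
  simp only [poch, Finset.prod_range_succ, Nat.factorial_succ, Nat.cast_mul, Nat.cast_succ]
  congr 1 <;> ring

lemma norm_hypergeomTerm_ratio_le {a b c : ℂ} (hc : 4 * (‖a‖ + 1) * (‖b‖ + 1) ≤ c.re) (k : ℕ) :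
    ‖(a + k) * (b + k) / ((c + k) * (k + 1))‖ ≤ ((k + 1) / (k + 2)) ^ 2 := by
  have hA : 0 ≤ ‖a‖ := norm_nonneg a
  have hB : 0 ≤ ‖b‖ := norm_nonneg b
  have hk : (0 : ℝ) ≤ k := k.cast_nonneg
  have ha : ‖a + k‖ ≤ ‖a‖ + k := (norm_add_le _ _).trans (by simp)
  have hb : ‖b + k‖ ≤ ‖b‖ + k := (norm_add_le _ _).trans (by simp)
  have hck : 4 * (‖a‖ + 1) * (‖b‖ + 1) + k ≤ ‖c + k‖ :=
    le_trans (by simpa using hc) (re_le_norm _)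
  have hk1 : ‖(k : ℂ) + 1‖ = k + 1 := by exact_mod_cast Complex.norm_natCast (k + 1)
  have hpoly : (‖a‖ + k) * (‖b‖ + k) * (k + 2) ^ 2 ≤
      (k + 1) ^ 2 * ((4 * (‖a‖ + 1) * (‖b‖ + 1) + k) * (k + 1)) := by
    have : 0 ≤ k ^ 3 * (4 * ‖a‖ * ‖b‖ + 3 * ‖a‖ + 3 * ‖b‖ + 3)
        + k ^ 2 * (11 * ‖a‖ * ‖b‖ + 8 * ‖a‖ + 8 * ‖b‖ + 11)
        + k * (8 * ‖a‖ * ‖b‖ + 8 * ‖a‖ + 8 * ‖b‖ + 13) + (4 * ‖a‖ + 4 * ‖b‖ + 4) := by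
      positivity
    linear_combination this
  have hck_pos : 0 < ‖c + k‖ := lt_of_lt_of_le (by positivity) hck
  rw [norm_div, norm_mul, norm_mul, hk1, div_le_iff₀ (by positivity)]
  calc ‖a + k‖ * ‖b + k‖ ≤ (‖a‖ + k) * (‖b‖ + k) :=
        mul_le_mul ha hb (norm_nonneg _) (by positivity)
    _ ≤ ((k + 1) / (k + 2)) ^ 2 * ((4 * (‖a‖ + 1) * (‖b‖ + 1) + k) * (k + 1)) := by
      rw [div_pow, div_mul_eq_mul_div, le_div_iff₀ (by positivity)]
      exact hpoly
    _ ≤ ((k + 1) / (k + 2)) ^ 2 * (‖c + k‖ * (k + 1)) := by gcongr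

lemma norm_hypergeomTerm_le {a b c : ℂ} (hc : 4 * (‖a‖ + 1) * (‖b‖ + 1) ≤ c.re) (k : ℕ) :
    ‖hypergeomTerm a b c k‖ ≤ 1 / ((k : ℝ) + 1) ^ 2 := by
  induction k with
  | zero => simp [hypergeomTerm_zero]
  | succ k ih =>
    rw [hypergeomTerm_succ, norm_mul]
    calc _ ≤ 1 / ((k : ℝ) + 1) ^ 2 * ((k + 1) / (k + 2)) ^ 2 :=
          mul_le_mul ih (norm_hypergeomTerm_ratio_le hc k) (norm_nonneg _) (by positivity)
      _ = 1 / (((k + 1 : ℕ) : ℝ) + 1) ^ 2 := by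
          push_cast
          field_simp
          ring

lemma summable_one_div_nat_add_one_sq : Summable fun k : ℕ => 1 / ((k : ℝ) + 1) ^ 2 := by
  simpa using (summable_nat_add_iff 1).mpr (Real.summable_one_div_nat_pow.mpr one_lt_two)

lemma tendsto_hypergeomTerm (a b : ℂ) (k : ℕ) :
    Tendsto (fun c => hypergeomTerm a b c k) (comap re atTop) (𝓝 (if k = 0 then 1 else 0)) := by
  induction k with
  | zero => simpa [hypergeomTerm_zero] using tendsto_const_nhds
  | succ k ih =>
    have hcob :
        Tendsto (fun c : ℂ => (c + k) * (k + 1)) (comap re atTop) (Bornology.cobounded ℂ) := by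
      rw [← tendsto_norm_atTop_iff_cobounded]
      refine tendsto_atTop_mono (fun c => ?_) tendsto_comap
      calc c.re ≤ (c + k).re := by simp
        _ ≤ ‖c + k‖ := re_le_norm _
        _ ≤ ‖(c + k) * (k + 1)‖ := by
          rw [norm_mul]
          exact le_mul_of_one_le_right (norm_nonneg _) (by norm_cast; simp)
    have hratio := (tendsto_const_nhds (x := (a + k) * (b + k))).mul
      (tendsto_inv₀_cobounded.comp hcob)
    simpa [hypergeomTerm_succ, div_eq_mul_inv] using ih.mul hratio

lemma tendsto_tsum_hypergeomTerm (a b : ℂ) :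
    Tendsto (fun c => ∑' k, hypergeomTerm a b c k) (comap re atTop) (𝓝 1) := by
  have hbound : ∀ᶠ c in comap re atTop, ∀ k, ‖hypergeomTerm a b c k‖ ≤ 1 / ((k : ℝ) + 1) ^ 2 :=
    (tendsto_comap.eventually (eventually_ge_atTop _)).mono fun c hc => norm_hypergeomTerm_le hc
  simpa using tendsto_tsum_of_dominated_convergence summable_one_div_nat_add_one_sq
    (tendsto_hypergeomTerm a b) hbound

theorem gauss_sum_tendsto_one (a b c : ℂ) (hre : 0 < (c - a - b).re)
    (hc : ∀ m : ℕ, c ≠ -(m : ℂ)) (hca : ∀ m : ℕ, c - a ≠ -(m : ℂ))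
    (hcb : ∀ m : ℕ, c - b ≠ -(m : ℂ)) :
    Tendsto (fun n : ℕ => ∑' k : ℕ, Fg a b c n k) atTop (nhds 1) := by
  have hcab : ∀ m : ℕ, c - a - b ≠ -m := fun m h =>
    Gamma_ne_zero_of_re_pos hre ((Gamma_eq_zero_iff _).mpr ⟨m, h⟩)
  have hGamma := tendsto_Gamma_mul_Gamma_div_Gamma_mul_Gamma hca hcb hc hcab (by ring)
  have hre_add : Tendsto (fun n : ℕ => c + n) atTop (comap re atTop) :=
    tendsto_comap_iff.mpr <| by
      simpa [Function.comp_def] using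
        tendsto_atTop_add_const_left _ c.re tendsto_natCast_atTop_atTop
  have hsum := (tendsto_tsum_hypergeomTerm a b).comp hre_add
  simpa [Fg, hypergeomTerm, tsum_mul_right, add_sub_right_comm] using hsum.mul hGamma
end
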